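/- arXiv:2107.03633 — 4 statements merged into one kernel-verified Lean document; each statement's English description precedes it below -/
import Mathlib

section
/- Suppose L : H → ℝ is a functional on a Hilbert space that is bounded above, and a_t is a gradient ascent trajectory dа_t/dt = ∇L(a_t) with a₀ ∈ H. Then ‖a_t‖/√t → 0 as t → ∞. -/
open Real Filter Topology

/-!
Along the flow `d/dt L(a_t) = ‖∇L(a_t)‖²`, so the pointwise AM-GM bound
`‖∇L‖ ≤ ‖∇L‖² / (2c) + c / 2` integrates to
`‖a_t - a_s‖ ≤ (L(a_t) - L(a_s)) / (2c) + c (t - s) / 2` for every `c > 0`; optimising in `c`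
gives `‖a_t - a_s‖ ≤ √(t - s) · √(L(a_t) - L(a_s))`. Since `L ∘ a` increases to a finite limit,
the second factor is as small as we like once `s` is large, whence `‖a_t‖ = o(√t)`.
-/

theorem HasGradientAt.hasDerivAt_comp {H : Type*} [NormedAddCommGroup H]
    [InnerProductSpace ℝ H] [CompleteSpace H] {L : H → ℝ} {v w : H} {a : ℝ → H} {t : ℝ}
    (hL : HasGradientAt L v (a t)) (ha : HasDerivAt a w t) :
    HasDerivAt (L ∘ a) (inner ℝ v w) t := by
  simpa using hL.hasFDerivAt.comp_hasDerivAt t ha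

theorem le_sqrt_mul_sqrt_of_forall_pos_le {x D T : ℝ} (hD : 0 ≤ D) (hT : 0 ≤ T)
    (h : ∀ c > 0, x ≤ D / (2 * c) + c * T / 2) : x ≤ √T * √D := by
  have h_perturbed : ∀ δ > 0, x ≤ √(T + δ) * √(D + δ) := by
    intro δ hδ
    have hD' : 0 < D + δ := by linarith
    have hT' : 0 < T + δ := by linarith
    -- the minimising choice of `c` for the perturbed data `D + δ`, `T + δ`
    set c := √(D + δ) / √(T + δ) with hc
    have hc_pos : 0 < c := by positivity
    calc x ≤ D / (2 * c) + c * T / 2 := h c hc_pos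
      _ ≤ (D + δ) / (2 * c) + c * (T + δ) / 2 := by gcongr <;> linarith
      _ = √(T + δ) * √(D + δ) := by
        rw [hc]
        field_simp
        rw [sq_sqrt hD'.le, sq_sqrt hT'.le]
        ring
  have h_lim : Tendsto (fun δ => √(T + δ) * √(D + δ)) (𝓝[>] 0) (𝓝 (√T * √D)) := by
    have : Continuous fun δ : ℝ => √(T + δ) * √(D + δ) := by fun_prop
    simpa using (this.tendsto 0).mono_left nhdsWithin_le_nhds
  exact ge_of_tendsto h_lim (eventually_nhdsWithin_of_forall h_perturbed)

theorem norm_sub_le_sqrt_mul_sqrt_of_hasDerivAt {E : Type*} [NormedAddCommGroup E]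
    [NormedSpace ℝ E] {a a' : ℝ → E} {f : ℝ → ℝ} (ha : ∀ u, HasDerivAt a (a' u) u)
    (hf : ∀ u, HasDerivAt f (‖a' u‖ ^ 2) u) {s t : ℝ} (hst : s ≤ t) :
    ‖a t - a s‖ ≤ √(t - s) * √(f t - f s) := by
  have hf_mono : Monotone f := monotone_of_hasDerivAt_nonneg hf fun u => sq_nonneg _
  refine le_sqrt_mul_sqrt_of_forall_pos_le (sub_nonneg.2 (hf_mono hst)) (sub_nonneg.2 hst)
    fun c hc => ?_
  have hB : ∀ u, HasDerivAt (fun u => (f u - f s) / (2 * c) + c * (u - s) / 2)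
      (‖a' u‖ ^ 2 / (2 * c) + c / 2) u := fun u => by
    simpa using (((hf u).sub_const (f s)).div_const (2 * c)).fun_add
      ((((hasDerivAt_id u).sub_const s).const_mul c).div_const 2)
  have h_amgm : ∀ u, ‖a' u‖ ≤ ‖a' u‖ ^ 2 / (2 * c) + c / 2 := fun u => by
    have : ‖a' u‖ ^ 2 / (2 * c) + c / 2 = (‖a' u‖ ^ 2 + c ^ 2) / (2 * c) := by
      field_simp
    rw [this, le_div_iff₀ (by positivity)]
    nlinarith [sq_nonneg (‖a' u‖ - c)]
  exact image_norm_le_of_norm_deriv_right_le_deriv_boundary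
    (fun u _ => ((ha u).sub_const (a s)).continuousAt.continuousWithinAt)
    (fun u _ => ((ha u).sub_const (a s)).hasDerivWithinAt) (by simp) hB
    (fun u _ => h_amgm u) (Set.right_mem_Icc.2 hst)

theorem tendsto_norm_div_sqrt_atTop_zero {E : Type*} [SeminormedAddCommGroup E] {a : ℝ → E}
    {f : ℝ → ℝ} (hf : Monotone f) (hf_bdd : BddAbove (Set.range f))
    (h : ∀ s t, s ≤ t → ‖a t - a s‖ ≤ √(t - s) * √(f t - f s)) :
    Tendsto (fun t => ‖a t‖ / √t) atTop (𝓝 0) := by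
  set ℓ := ⨆ t, f t
  have h_gap : Tendsto (fun s => √(ℓ - f s)) atTop (𝓝 0) := by
    have := ((tendsto_const_nhds (x := ℓ)).sub (tendsto_atTop_ciSup hf hf_bdd)).sqrt
    rwa [sub_self, sqrt_zero] at this
  refine tendsto_order.2 ⟨fun b hb => .of_forall fun t => hb.trans_le (by positivity),
    fun ε hε => ?_⟩
  obtain ⟨s, hs_gap, hs_nonneg⟩ :=
    ((h_gap.eventually (gt_mem_nhds (half_pos hε))).and (eventually_ge_atTop 0)).exists
  have h_start : Tendsto (fun t => ‖a s‖ / √t) atTop (𝓝 0) :=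
    tendsto_const_nhds.div_atTop tendsto_sqrt_atTop
  filter_upwards [h_start.eventually (gt_mem_nhds (half_pos hε)), eventually_ge_atTop s,
    eventually_gt_atTop 0] with t ht_start hst ht_pos
  have ht_sqrt : 0 < √t := sqrt_pos.2 ht_pos
  have h_norm : ‖a t‖ ≤ ‖a s‖ + √t * √(ℓ - f s) :=
    calc ‖a t‖ ≤ ‖a s‖ + ‖a t - a s‖ := norm_le_norm_add_norm_sub' _ _
      _ ≤ ‖a s‖ + √(t - s) * √(f t - f s) := by gcongr; exact h s t hst
      _ ≤ ‖a s‖ + √t * √(ℓ - f s) := by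
        gcongr
        · linarith
        · exact le_ciSup hf_bdd t
  calc ‖a t‖ / √t ≤ (‖a s‖ + √t * √(ℓ - f s)) / √t := by gcongr
    _ = ‖a s‖ / √t + √(ℓ - f s) := by field_simp
    _ < ε := by linarith

/-- along a gradient ascent flow `ȧ_t = ∇L(a_t)` of a functional
`L` on a Hilbert space that is bounded above, `‖a_t‖/√t → 0` as `t → ∞`. -/
theorem gradient_ascent_norm_growth
    {H : Type*} [NormedAddCommGroup H] [InnerProductSpace ℝ H] [CompleteSpace H]
    (L : H → ℝ) (hbdd : BddAbove (Set.range L))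
    (g : H → H) (hg : ∀ p, HasGradientAt L (g p) p)
    (a : ℝ → H) (ha : ∀ t, HasDerivAt a (g (a t)) t) :
    Tendsto (fun t : ℝ => ‖a t‖ / Real.sqrt t) atTop (𝓝 0) := by
  have h_energy : ∀ t, HasDerivAt (L ∘ a) (‖g (a t)‖ ^ 2) t := fun t => by
    simpa [real_inner_self_eq_norm_sq] using (hg (a t)).hasDerivAt_comp (ha t)
  refine tendsto_norm_div_sqrt_atTop_zero
    (monotone_of_hasDerivAt_nonneg h_energy fun t => sq_nonneg _)
    (hbdd.mono (Set.range_comp_subset_range a L))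
    fun s t hst => norm_sub_le_sqrt_mul_sqrt_of_hasDerivAt ha h_energy hst
end

section
/- Let 𝒩 be an absolutely continuous probability measure on ℝ^d with finite second moment, P* ∈ P₂(ℝ^d), and G ∈ L²(𝒩; ℝ^d) with P = G#𝒩. Then W₂(P, P*) = inf{ ‖G − G*‖_{L²(𝒩)} : G* ∈ L²(𝒩;ℝ^d), G*#𝒩 = P* }. -/
/-!
A generator `Gs` with `Gs # ν = P*` gives the coupling `(G, Gs) # ν` of cost `‖G - Gs‖_{L²(ν)}`,
so `W₂` is at most the infimum. Conversely, fix a coupling `γ` of `G # ν` and `P*` and `ε > 0`, and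
quantize space by a measurable `K : E → ℕ` whose cells have radius `ε`. As `ν` has no atoms, its
restriction to each cell `{K ∘ G = n}` can be pushed onto the law of the second coordinate of `γ` on
`{K(p.1) = n}` (through the cdf of an embedding into `ℝ` onto the uniform law of `[0, 1]`, and from
there onto any law on a standard Borel space). Gluing these maps gives `Gs` with
`(K ∘ G, Gs) # ν = (K × id) # γ`; hence `Gs # ν = P*` and `‖G - Gs‖_{L²(ν)} ≤ cost γ + 2ε`.
When `d = 0` the space is a point and `G` itself is admissible.
-/

open MeasureTheory Real Filter Topology
open scoped ENNReal BigOperators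

/-- The 2-Wasserstein distance, defined as an infimum over couplings. -/
noncomputable def W2 {α : Type*} [MeasurableSpace α] [PseudoEMetricSpace α]
    (μ ν : Measure α) : ℝ≥0∞ :=
  ⨅ (cpl : Measure (α × α)) (_ : cpl.map Prod.fst = μ) (_ : cpl.map Prod.snd = ν),
    (∫⁻ p, edist p.1 p.2 ^ 2 ∂cpl) ^ (1/2 : ℝ)

open Set ProbabilityTheory unitInterval

namespace ProbabilityTheory

variable (μ : Measure ℝ) [IsProbabilityMeasure μ] [NullSingletonClass μ]

theorem continuous_cdf : Continuous (cdf μ) := by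
  refine continuous_iff_continuousAt.2 fun x => ?_
  rw [(monotone_cdf μ).continuousAt_iff_leftLim_eq_rightLim, (cdf μ).rightLim_eq]
  have h := (cdf μ).measure_singleton x
  rw [measure_cdf, measure_singleton, eq_comm, ENNReal.ofReal_eq_zero, sub_nonpos] at h
  exact le_antisymm ((monotone_cdf μ).leftLim_le le_rfl) h

theorem measure_setOf_cdf_le {t : ℝ} (ht0 : 0 ≤ t) (ht1 : t ≤ 1) :
    μ {x | cdf μ x ≤ t} = ENNReal.ofReal t := by
  rcases ht1.lt_or_eq with ht1 | rfl
  swap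
  · simp [cdf_le_one]
  set S := {x | cdf μ x ≤ t}
  have hS_bdd : BddAbove S := by
    obtain ⟨b, hb⟩ := ((tendsto_cdf_atTop μ).eventually_const_lt ht1).exists_forall_of_atTop
    exact ⟨b, fun x hx => not_lt.1 fun hbx => (hb x hbx.le).not_ge hx⟩
  rcases S.eq_empty_or_nonempty with hS | hS
  · obtain rfl : t = 0 := by
      refine le_antisymm (not_lt.1 fun ht => ?_) ht0
      obtain ⟨x, hx⟩ := ((tendsto_cdf_atBot μ).eventually_lt_const ht).exists
      exact hS.subset hx.le
    simp [hS]
  have hsS : sSup S ∈ S :=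
    (isClosed_le (continuous_cdf μ) continuous_const).csSup_mem hS hS_bdd
  have hS_eq : S = Iic (sSup S) :=
    Subset.antisymm (fun x hx => le_csSup hS_bdd hx) fun x hx => (monotone_cdf μ hx).trans hsS
  -- to the right of `sSup S` the cdf exceeds `t`, so by continuity it is `t` at `sSup S`
  have hts : t ≤ cdf μ (sSup S) :=
    ge_of_tendsto ((continuous_cdf μ).continuousAt.tendsto.mono_left
      (nhdsWithin_le_nhds (s := Ioi (sSup S)))) (eventually_nhdsWithin_of_forall
        fun y hy => (not_le.1 fun h => not_le.2 hy (le_csSup hS_bdd h)).le)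
  rw [hS_eq, ← ofReal_cdf, le_antisymm hsS hts]

theorem map_cdf_eq_volume :
    μ.map (fun x => (⟨cdf μ x, cdf_nonneg μ x, cdf_le_one μ x⟩ : I)) = volume := by
  have hm : Measurable (fun x => (⟨cdf μ x, cdf_nonneg μ x, cdf_le_one μ x⟩ : I)) :=
    (monotone_cdf μ).measurable.subtype_mk
  refine Measure.ext_of_Iic _ _ fun t => ?_
  rw [Measure.map_apply hm measurableSet_Iic, unitInterval.volume_Iic]
  exact measure_setOf_cdf_le μ t.2.1 t.2.2

end ProbabilityTheory

section StandardBorel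

variable {X Y : Type*} [MeasurableSpace X] [StandardBorelSpace X]
  [MeasurableSpace Y] [StandardBorelSpace Y] [Nonempty Y]

theorem exists_measurable_map_eq_volume_unitInterval (μ : Measure X) [IsProbabilityMeasure μ]
    [NullSingletonClass μ] : ∃ u : X → I, Measurable u ∧ μ.map u = volume := by
  have he := measurableEmbedding_embeddingReal X
  set ρ := μ.map (embeddingReal X)
  have : IsProbabilityMeasure ρ := Measure.isProbabilityMeasure_map he.measurable.aemeasurable
  have : NullSingletonClass ρ := ⟨fun y => by
    rw [he.map_apply]
    exact (subsingleton_singleton.preimage he.injective).measure_zero μ⟩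
  have hm : Measurable fun x => (⟨cdf ρ x, cdf_nonneg ρ x, cdf_le_one ρ x⟩ : I) :=
    (monotone_cdf ρ).measurable.subtype_mk
  exact ⟨_, hm.comp he.measurable, by rw [← Measure.map_map hm he.measurable, map_cdf_eq_volume]⟩

theorem exists_measurable_map_eq_of_nullSingletonClass (μ : Measure X) [IsProbabilityMeasure μ]
    [NullSingletonClass μ] (ν : Measure Y) [IsProbabilityMeasure ν] :
    ∃ f : X → Y, Measurable f ∧ μ.map f = ν := by
  obtain ⟨u, hu, hμu⟩ := exists_measurable_map_eq_volume_unitInterval μ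
  obtain ⟨g, hg, hgν⟩ := ν.exists_measurable_map_eq
  exact ⟨g ∘ u, hg.comp hu, by rw [← Measure.map_map hg hu, hμu, hgν]⟩

theorem exists_measurable_map_eq_of_measure_univ_eq (μ : Measure X) [IsFiniteMeasure μ]
    [NullSingletonClass μ] (ν : Measure Y) (h : μ univ = ν univ) :
    ∃ f : X → Y, Measurable f ∧ μ.map f = ν := by
  rcases eq_zero_or_neZero μ with rfl | _
  · refine ⟨fun _ => Classical.arbitrary Y, measurable_const, ?_⟩
    rw [Measure.map_zero, eq_comm, ← Measure.measure_univ_eq_zero, ← h, Measure.coe_zero,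
      Pi.zero_apply]
  set m := μ univ
  have hm0 : m ≠ 0 := NeZero.ne m
  have hmtop : m ≠ ∞ := measure_ne_top μ univ
  have : IsProbabilityMeasure (m⁻¹ • ν) := ⟨by
    rw [Measure.smul_apply, ← h, smul_eq_mul, ENNReal.inv_mul_cancel hm0 hmtop]⟩
  have : NullSingletonClass (m⁻¹ • μ) := ⟨fun x => by simp⟩
  obtain ⟨f, hf, hfν⟩ := exists_measurable_map_eq_of_nullSingletonClass (m⁻¹ • μ) (m⁻¹ • ν)
  refine ⟨f, hf, ?_⟩
  have := congrArg (m • ·) hfν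
  simpa only [Measure.map_smul, smul_smul, ENNReal.mul_inv_cancel hm0 hmtop, one_smul] using this

end StandardBorel

theorem exists_measurable_nat_dist_lt (E : Type*) [PseudoMetricSpace E]
    [TopologicalSpace.SeparableSpace E] [Nonempty E] [MeasurableSpace E] [OpensMeasurableSpace E]
    {ε : ℝ} (hε : 0 < ε) : ∃ (K : E → ℕ) (c : ℕ → E), Measurable K ∧ ∀ y, dist y (c (K y)) < ε := by
  classical
  have hex : ∀ y, ∃ n, dist y (TopologicalSpace.denseSeq E n) < ε := fun y =>
    (TopologicalSpace.denseRange_denseSeq E).exists_dist_lt y hε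
  exact ⟨fun y => Nat.find (hex y), _,
    measurable_find hex fun _ => Metric.isOpen_ball.measurableSet, fun y => Nat.find_spec (hex y)⟩

theorem MeasureTheory.Measure.sum_restrict_preimage_singleton {α ι : Type*} [MeasurableSpace α]
    [MeasurableSpace ι] [Countable ι] [MeasurableSingletonClass ι] (μ : Measure α) {K : α → ι}
    (hK : Measurable K) : Measure.sum (fun i => μ.restrict (K ⁻¹' {i})) = μ := by
  rw [← Measure.restrict_iUnion (fun i j hij => (disjoint_singleton.2 hij).preimage K)
    fun i => hK (measurableSet_singleton i), ← preimage_iUnion, iUnion_of_singleton,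
    preimage_univ, Measure.restrict_univ]

theorem exists_measurable_map_prodMk_eq {X Y ι : Type*} [MeasurableSpace X] [StandardBorelSpace X]
    [MeasurableSpace Y] [StandardBorelSpace Y] [Nonempty Y]
    [MeasurableSpace ι] [Countable ι] [MeasurableSingletonClass ι] (μ : Measure X) [IsFiniteMeasure μ] [NullSingletonClass μ]
    {K : X → ι} (hK : Measurable K) (γ : Measure (ι × Y)) (hγ : γ.map Prod.fst = μ.map K) :
    ∃ g : X → Y, Measurable g ∧ μ.map (fun x => (K x, g x)) = γ := by
  have hfiber : ∀ i, ∃ f : X → Y, Measurable f ∧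
      (μ.restrict (K ⁻¹' {i})).map f = (γ.restrict (Prod.fst ⁻¹' {i})).map Prod.snd := by
    intro i
    refine exists_measurable_map_eq_of_measure_univ_eq _ _ ?_
    rw [Measure.map_apply measurable_snd MeasurableSet.univ, preimage_univ,
      Measure.restrict_apply_univ, Measure.restrict_apply_univ,
      ← Measure.map_apply hK (measurableSet_singleton i), ← hγ,
      Measure.map_apply measurable_fst (measurableSet_singleton i)]
  choose f hf hfμ using hfiber
  have hg : Measurable fun x => f (K x) x :=
    (measurable_from_prod_countable_left (f := fun p : X × ι => f p.2 p.1) hf).comp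
      (measurable_id.prodMk hK)
  refine ⟨fun x => f (K x) x, hg, ?_⟩
  have hfiber_map : ∀ i, (μ.restrict (K ⁻¹' {i})).map (fun x => (K x, f (K x) x)) =
      γ.restrict (Prod.fst ⁻¹' {i}) := by
    intro i
    calc (μ.restrict (K ⁻¹' {i})).map (fun x => (K x, f (K x) x))
        = ((μ.restrict (K ⁻¹' {i})).map (f i)).map (Prod.mk i) := by
          rw [Measure.map_map measurable_prodMk_left (hf i)]
          refine Measure.map_congr (ae_restrict_of_forall_mem (hK (measurableSet_singleton i)) ?_)
          intro x hx
          rw [mem_preimage, mem_singleton_iff] at hx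
          simp [hx]
      _ = (γ.restrict (Prod.fst ⁻¹' {i})).map (fun p => (i, p.2)) := by
          rw [hfμ, Measure.map_map measurable_prodMk_left measurable_snd]
          rfl
      _ = γ.restrict (Prod.fst ⁻¹' {i}) := by
          conv_rhs => rw [← Measure.map_id (μ := γ.restrict (Prod.fst ⁻¹' {i}))]
          refine Measure.map_congr (ae_restrict_of_forall_mem
            (measurable_fst (measurableSet_singleton i)) fun p hp => ?_)
          rw [mem_preimage, mem_singleton_iff] at hp
          simp [← hp]
  rw [← μ.sum_restrict_preimage_singleton hK, Measure.map_sum (hK.prodMk hg).aemeasurable,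
    ← γ.sum_restrict_preimage_singleton measurable_fst]
  exact congrArg Measure.sum (funext hfiber_map)

theorem lintegral_edist_sq_rpow_eq_eLpNorm {E : Type*} [NormedAddCommGroup E] [MeasurableSpace E]
    (γ : Measure (E × E)) :
    (∫⁻ p, edist p.1 p.2 ^ 2 ∂γ) ^ (1 / 2 : ℝ) = eLpNorm (fun p => p.1 - p.2) 2 γ := by
  rw [eLpNorm_eq_lintegral_rpow_enorm_toReal two_ne_zero ENNReal.ofNat_ne_top]
  simp [edist_eq_enorm_sub]

theorem eLpNorm_le_ofReal_of_norm_le {α E : Type*} [MeasurableSpace α] [NormedAddCommGroup E]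
    (ρ : Measure α) [IsProbabilityMeasure ρ] {f : α → E} {δ : ℝ} (hf : ∀ x, ‖f x‖ ≤ δ) :
    eLpNorm f 2 ρ ≤ ENNReal.ofReal δ := by
  simpa using eLpNorm_le_of_ae_bound (p := 2) (μ := ρ) (ae_of_all _ hf)

section Coupling

variable {X E : Type*} [MeasurableSpace X] [NormedAddCommGroup E] [MeasurableSpace E]
  [BorelSpace E] [SecondCountableTopology E]

theorem W2_map_le_eLpNorm_sub (μ : Measure X) {G G' : X → E} (hG : Measurable G)
    (hG' : Measurable G') : W2 (μ.map G) (μ.map G') ≤ eLpNorm (G - G') 2 μ := by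
  have hpair : Measurable fun x => (G x, G' x) := hG.prodMk hG'
  have hsub : Continuous fun p : E × E => p.1 - p.2 := continuous_fst.sub continuous_snd
  refine iInf_le_of_le (μ.map fun x => (G x, G' x)) <| iInf_le_of_le ?_ <| iInf_le_of_le ?_ ?_
  · rw [Measure.map_map measurable_fst hpair]; rfl
  · rw [Measure.map_map measurable_snd hpair]; rfl
  · rw [lintegral_edist_sq_rpow_eq_eLpNorm, eLpNorm_map_measure
      hsub.aestronglyMeasurable hpair.aemeasurable]
    rfl

theorem eLpNorm_sub_le_of_map_prodMk_eq (μ : Measure X) [IsProbabilityMeasure μ] {G Gs : X → E}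
    {q : E → E} (hG : Measurable G) (hGs : Measurable Gs) (hq : Measurable q) {δ : ℝ}
    (hqδ : ∀ y, ‖y - q y‖ ≤ δ) (γ : Measure (E × E)) (hγ : γ.map Prod.fst = μ.map G)
    (hmap : μ.map (fun x => (q (G x), Gs x)) = γ.map (Prod.map q id)) :
    eLpNorm (G - Gs) 2 μ ≤ eLpNorm (fun p => p.1 - p.2) 2 γ + 2 * ENNReal.ofReal δ := by
  have : IsProbabilityMeasure (γ.map Prod.fst) :=
    hγ ▸ Measure.isProbabilityMeasure_map hG.aemeasurable
  have : IsProbabilityMeasure γ := Measure.isProbabilityMeasure_of_map Prod.fst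
  have hsub : Continuous fun p : E × E => p.1 - p.2 := continuous_fst.sub continuous_snd
  have htransfer : eLpNorm (fun x => q (G x) - Gs x) 2 μ = eLpNorm (fun p => q p.1 - p.2) 2 γ := by
    calc eLpNorm (fun x => q (G x) - Gs x) 2 μ
        = eLpNorm (fun p => p.1 - p.2) 2 (μ.map fun x => (q (G x), Gs x)) :=
          (eLpNorm_map_measure hsub.aestronglyMeasurable
            ((hq.comp hG).prodMk hGs).aemeasurable).symm
      _ = eLpNorm (fun p => q p.1 - p.2) 2 γ := by
          rw [hmap, eLpNorm_map_measure hsub.aestronglyMeasurable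
            (hq.prodMap measurable_id).aemeasurable]
          rfl
  calc eLpNorm (G - Gs) 2 μ
      = eLpNorm ((fun x => G x - q (G x)) + fun x => q (G x) - Gs x) 2 μ := by
        congr 1; ext x; simp
    _ ≤ eLpNorm (fun x => G x - q (G x)) 2 μ + eLpNorm (fun p => q p.1 - p.2) 2 γ := by
        rw [← htransfer]
        exact eLpNorm_add_le (hG.sub (hq.comp hG)).aestronglyMeasurable
          ((hq.comp hG).sub hGs).aestronglyMeasurable one_le_two
    _ ≤ ENNReal.ofReal δ +
        (eLpNorm (fun p => q p.1 - p.1) 2 γ + eLpNorm (fun p => p.1 - p.2) 2 γ) := by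
        gcongr
        · exact eLpNorm_le_ofReal_of_norm_le μ fun x => hqδ (G x)
        · have hsplit : (fun p : E × E => q p.1 - p.2) =
              (fun p => q p.1 - p.1) + fun p => p.1 - p.2 := by
            ext p; simp
          rw [hsplit]
          exact eLpNorm_add_le ((hq.comp measurable_fst).sub measurable_fst).aestronglyMeasurable
            hsub.aestronglyMeasurable one_le_two
    _ ≤ ENNReal.ofReal δ + (ENNReal.ofReal δ + eLpNorm (fun p => p.1 - p.2) 2 γ) := by
        gcongr
        exact eLpNorm_le_ofReal_of_norm_le γ fun p => (norm_sub_rev _ _).trans_le (hqδ p.1)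
    _ = eLpNorm (fun p => p.1 - p.2) 2 γ + 2 * ENNReal.ofReal δ := by ring

end Coupling

theorem iInf_eLpNorm_sub_le_of_subsingleton {X E : Type*} [MeasurableSpace X]
    [NormedAddCommGroup E] [MeasurableSpace E] [Subsingleton E] (μ : Measure X) {G : X → E}
    (hG : Measurable G) (hG2 : MemLp G 2 μ) (γ : Measure (E × E))
    (hγ : γ.map Prod.fst = μ.map G) :
    ⨅ (Gs : X → E) (_ : Measurable Gs) (_ : MemLp Gs 2 μ) (_ : μ.map Gs = γ.map Prod.snd),
      eLpNorm (G - Gs) 2 μ ≤ eLpNorm (fun p => p.1 - p.2) 2 γ := by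
  have hsnd : γ.map Prod.snd = μ.map G := by
    rw [← hγ]
    congr 1
    funext p
    exact Subsingleton.elim _ _
  refine iInf_le_of_le G <| iInf_le_of_le hG <| iInf_le_of_le hG2 <| iInf_le_of_le hsnd.symm ?_
  simp

theorem iInf_eLpNorm_sub_le_of_coupling {X E : Type*} [MeasurableSpace X] [StandardBorelSpace X]
    [NormedAddCommGroup E] [MeasurableSpace E] [BorelSpace E] [SecondCountableTopology E]
    [CompleteSpace E] (μ : Measure X) [IsProbabilityMeasure μ] [NullSingletonClass μ] {G : X → E}
    (hG : Measurable G) (hG2 : MemLp G 2 μ) (γ : Measure (E × E))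
    (hγ : γ.map Prod.fst = μ.map G) :
    ⨅ (Gs : X → E) (_ : Measurable Gs) (_ : MemLp Gs 2 μ) (_ : μ.map Gs = γ.map Prod.snd),
      eLpNorm (G - Gs) 2 μ ≤ eLpNorm (fun p => p.1 - p.2) 2 γ := by
  refine ENNReal.le_of_forall_pos_le_add fun ε hε hγ_fin => ?_
  obtain ⟨K, c, hK, hKc⟩ := exists_measurable_nat_dist_lt E (half_pos (NNReal.coe_pos.2 hε))
  have hKid : Measurable (Prod.map K id : E × E → ℕ × E) := hK.prodMap measurable_id
  obtain ⟨Gs, hGs, hmap⟩ := exists_measurable_map_prodMk_eq μ (hK.comp hG) (γ.map (Prod.map K id))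
    (by rw [Measure.map_map measurable_fst hKid, ← Measure.map_map hK hG, ← hγ,
      Measure.map_map hK measurable_fst]; rfl)
  have hGs_map : μ.map Gs = γ.map Prod.snd := by
    have := congrArg (Measure.map Prod.snd) hmap
    rwa [Measure.map_map measurable_snd ((hK.comp hG).prodMk hGs),
      Measure.map_map measurable_snd hKid] at this
  have hq_map : μ.map (fun x => (c (K (G x)), Gs x)) = γ.map (Prod.map (c ∘ K) id) := by
    have hcid : Measurable (Prod.map c id : ℕ × E → E × E) :=
      measurable_from_nat.prodMap measurable_id
    have := congrArg (Measure.map (Prod.map c id)) hmap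
    rwa [Measure.map_map hcid ((hK.comp hG).prodMk hGs), Measure.map_map hcid hKid] at this
  have hbound : eLpNorm (G - Gs) 2 μ ≤ eLpNorm (fun p => p.1 - p.2) 2 γ + ε := by
    convert eLpNorm_sub_le_of_map_prodMk_eq μ hG hGs (measurable_from_nat.comp hK)
      (fun y => (dist_eq_norm y _ ▸ hKc y).le) γ hγ hq_map using 2
    rw [ENNReal.ofReal_div_of_pos two_pos, ENNReal.ofReal_coe_nnreal, ENNReal.ofReal_ofNat,
      ENNReal.mul_div_cancel two_ne_zero ENNReal.ofNat_ne_top]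
  have hGs2 : MemLp Gs 2 μ := by
    have : MemLp (G - Gs) 2 μ :=
      ⟨(hG.sub hGs).aestronglyMeasurable, hbound.trans_lt (ENNReal.add_lt_top.2 ⟨hγ_fin, by simp⟩)⟩
    simpa using hG2.sub this
  exact iInf_le_of_le Gs <| iInf_le_of_le hGs <| iInf_le_of_le hGs2 <| iInf_le_of_le hGs_map hbound

theorem wasserstein_eq_inf_L2_over_generators_general
    (d : ℕ) (nu Pstar : Measure (EuclideanSpace ℝ (Fin d)))
    [IsProbabilityMeasure nu]
    (hac : nu ≪ volume)
    (G : EuclideanSpace ℝ (Fin d) → EuclideanSpace ℝ (Fin d))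
    (hGm : Measurable G) (hG2 : MemLp G 2 nu) :
    W2 (Measure.map G nu) Pstar =
      ⨅ (Gs : EuclideanSpace ℝ (Fin d) → EuclideanSpace ℝ (Fin d))
        (_ : Measurable Gs) (_ : MemLp Gs 2 nu) (_ : Measure.map Gs nu = Pstar),
        eLpNorm (G - Gs) 2 nu := by
  refine le_antisymm ?_ ?_
  · exact le_iInf fun Gs => le_iInf fun hGs => le_iInf fun _ => le_iInf fun hmap =>
      hmap ▸ W2_map_le_eLpNorm_sub nu hGm hGs
  refine le_iInf fun γ => le_iInf fun hγ => le_iInf fun hPstar => ?_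
  subst hPstar
  rw [lintegral_edist_sq_rpow_eq_eLpNorm]
  rcases subsingleton_or_nontrivial (EuclideanSpace ℝ (Fin d)) with _ | _
  · exact iInf_eLpNorm_sub_le_of_subsingleton nu hGm hG2 γ hγ
  · have : NullSingletonClass nu := ⟨fun x => hac (measure_singleton x)⟩
    exact iInf_eLpNorm_sub_le_of_coupling nu hGm hG2 γ hγ

/-- for an absolutely continuous input distribution `𝒩` with
finite second moment, a target `P* ∈ P₂(ℝ^d)`, and a generator `G ∈ L²(𝒩;ℝ^d)`
with `P = G#𝒩`, the Wasserstein metric is the quotient of the `L²` loss: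
`W₂(P, P*) = inf{‖G - G*‖_{L²(𝒩)} : G*#𝒩 = P*}`. -/
theorem wasserstein_eq_inf_L2_over_generators
    (d : ℕ) (nu Pstar : Measure (EuclideanSpace ℝ (Fin d)))
    [IsProbabilityMeasure nu] [IsProbabilityMeasure Pstar]
    (hac : nu ≪ volume)
    (hnu2 : MemLp id 2 nu) (hP2 : MemLp id 2 Pstar)
    (G : EuclideanSpace ℝ (Fin d) → EuclideanSpace ℝ (Fin d))
    (hGm : Measurable G) (hG2 : MemLp G 2 nu) :
    W2 (Measure.map G nu) Pstar =
      ⨅ (Gs : EuclideanSpace ℝ (Fin d) → EuclideanSpace ℝ (Fin d))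
        (_ : Measurable Gs) (_ : MemLp Gs 2 nu) (_ : Measure.map Gs nu = Pstar),
        eLpNorm (G - Gs) 2 nu :=
  wasserstein_eq_inf_L2_over_generators_general d nu Pstar hac G hGm hG2
end

section
/- Let λᵢ ∈ (0,1], 0 < c ≤ √2, and consider forced oscillators ÿⁱ + cλᵢẏⁱ + λᵢyⁱ = qⁱ with yⁱ(0) = ẏⁱ(0) = 0. Then √λᵢ |yⁱ(t)| ≤ |qⁱ| t^{3/2}/√c for all t ≥ 0, and consequently Σᵢ λᵢ yⁱ(t)² ≤ (t³/c) Σᵢ (qⁱ)². -/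
open Real

/-!
Energy argument. Along a trajectory, `E = λ y² + ẏ²` satisfies
`E' = 2 q ẏ - 2 c λ ẏ² ≤ 2 |q| √E`, so `√E ≤ |q| t`. This gives `√λ |y| ≤ |q| t` and
`|ẏ| ≤ |q| t`, and integrating the latter, `|y| ≤ |q| t² / 2`. The linear bound gives
`|q| t^{3/2} / √c` for `t ≥ c`, and the quadratic one (with `λ ≤ 1`) for `t ≤ c`, because there
`√(t c) ≤ c ≤ 2`. Squaring and summing gives the series bound.
-/

theorem sqrt_le_mul_of_deriv_le_two_mul_sqrt {E E' : ℝ → ℝ} {a : ℝ} (ha : 0 ≤ a)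
    (hE : ∀ s, HasDerivAt E (E' s) s) (hE_nonneg : ∀ s, 0 ≤ E s) (hE0 : E 0 = 0)
    (hE' : ∀ s, E' s ≤ 2 * a * √(E s)) {t : ℝ} (ht : 0 ≤ t) :
    √(E t) ≤ a * t := by
  -- `√E` need not be differentiable where `E` vanishes, so compare `√(E + ε²)` with `a t + ε`.
  refine le_of_forall_pos_le_add fun ε hε => ?_
  have hpos : ∀ s, 0 < E s + ε ^ 2 := fun s => by linarith [hE_nonneg s, pow_pos hε 2]
  have hgap : ∀ s, HasDerivAt (fun s => a * s + ε - √(E s + ε ^ 2))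
      (a - E' s / (2 * √(E s + ε ^ 2))) s := fun s =>
    ((((hasDerivAt_id s).const_mul a).add_const ε).sub
      (((hE s).add_const (ε ^ 2)).sqrt (hpos s).ne')).congr_deriv (by simp)
  have hmono : Monotone fun s => a * s + ε - √(E s + ε ^ 2) := by
    refine monotone_of_deriv_nonneg (fun s => (hgap s).differentiableAt) fun s => ?_
    rw [(hgap s).deriv, sub_nonneg, div_le_iff₀ (mul_pos two_pos (sqrt_pos.2 (hpos s)))]
    calc E' s ≤ 2 * a * √(E s) := hE' s
      _ ≤ 2 * a * √(E s + ε ^ 2) := by gcongr; linarith [pow_pos hε 2]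
      _ = a * (2 * √(E s + ε ^ 2)) := by ring
  have h := hmono ht
  simp only [hE0, zero_add, mul_zero, sqrt_sq hε.le, sub_self] at h
  calc √(E t) ≤ √(E t + ε ^ 2) := sqrt_le_sqrt (le_add_of_nonneg_right (sq_nonneg ε))
    _ ≤ a * t + ε := by linarith

theorem abs_le_mul_sq_div_two_of_abs_deriv_le {y v : ℝ → ℝ} {b : ℝ}
    (hy : ∀ s, HasDerivAt y (v s) s) (hy0 : y 0 = 0) (hv : ∀ s, 0 ≤ s → |v s| ≤ b * s)
    {t : ℝ} (ht : 0 ≤ t) : |y t| ≤ b * t ^ 2 / 2 := by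
  have hB : ∀ s, HasDerivAt (fun s => b * s ^ 2 / 2) (b * s) s := fun s =>
    (((hasDerivAt_pow 2 s).const_mul b).div_const 2).congr_deriv (by ring)
  refine image_norm_le_of_norm_deriv_right_le_deriv_boundary (a := 0) (b := t)
    (fun s _ => (hy s).continuousAt.continuousWithinAt) (fun s _ => (hy s).hasDerivWithinAt)
    (by simp [hy0]) hB (fun s hs => hv s hs.1) ⟨ht, le_rfl⟩

namespace DampedOscillator

variable {lam c q : ℝ} {y v : ℝ → ℝ}

theorem hasDerivAt_energy
    (hy : ∀ t, HasDerivAt y (v t) t) (hv : ∀ t, HasDerivAt v (q - c * lam * v t - lam * y t) t)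
    (t : ℝ) :
    HasDerivAt (fun t => lam * y t ^ 2 + v t ^ 2) (2 * q * v t - 2 * c * lam * v t ^ 2) t := by
  have hy2 : HasDerivAt (fun t => y t ^ 2) (2 * y t * v t) t :=
    ((hy t).pow 2).congr_deriv (by ring)
  have hv2 : HasDerivAt (fun t => v t ^ 2) (2 * v t * (q - c * lam * v t - lam * y t)) t :=
    ((hv t).pow 2).congr_deriv (by ring)
  exact ((hy2.const_mul lam).add hv2).congr_deriv (by ring)

theorem sqrt_energy_le (hlam : 0 ≤ lam) (hc : 0 ≤ c)
    (hy : ∀ t, HasDerivAt y (v t) t) (hv : ∀ t, HasDerivAt v (q - c * lam * v t - lam * y t) t)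
    (hy0 : y 0 = 0) (hv0 : v 0 = 0) {t : ℝ} (ht : 0 ≤ t) :
    √(lam * y t ^ 2 + v t ^ 2) ≤ |q| * t := by
  refine sqrt_le_mul_of_deriv_le_two_mul_sqrt (abs_nonneg q) (hasDerivAt_energy hy hv)
    (fun s => by positivity) (by simp [hy0, hv0]) (fun s => ?_) ht
  have hv_le : |v s| ≤ √(lam * y s ^ 2 + v s ^ 2) := by
    rw [← sqrt_sq_eq_abs]; exact sqrt_le_sqrt (by nlinarith [sq_nonneg (y s)])
  have hdamp : 0 ≤ c * lam * v s ^ 2 := by positivity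
  calc 2 * q * v s - 2 * c * lam * v s ^ 2 ≤ 2 * (|q| * |v s|) := by
        nlinarith [abs_mul q (v s), le_abs_self (q * v s)]
    _ ≤ 2 * |q| * √(lam * y s ^ 2 + v s ^ 2) := by
        rw [mul_assoc]; gcongr

theorem sqrt_mul_abs_le (hlam : 0 ≤ lam) (hc : 0 ≤ c)
    (hy : ∀ t, HasDerivAt y (v t) t) (hv : ∀ t, HasDerivAt v (q - c * lam * v t - lam * y t) t)
    (hy0 : y 0 = 0) (hv0 : v 0 = 0) {t : ℝ} (ht : 0 ≤ t) :
    √lam * |y t| ≤ |q| * t :=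
  calc √lam * |y t| = √(lam * y t ^ 2) := by rw [sqrt_mul hlam, sqrt_sq_eq_abs]
    _ ≤ √(lam * y t ^ 2 + v t ^ 2) := sqrt_le_sqrt (le_add_of_nonneg_right (sq_nonneg _))
    _ ≤ |q| * t := sqrt_energy_le hlam hc hy hv hy0 hv0 ht

theorem abs_le_mul_sq_div_two (hlam : 0 ≤ lam) (hc : 0 ≤ c)
    (hy : ∀ t, HasDerivAt y (v t) t) (hv : ∀ t, HasDerivAt v (q - c * lam * v t - lam * y t) t)
    (hy0 : y 0 = 0) (hv0 : v 0 = 0) {t : ℝ} (ht : 0 ≤ t) :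
    |y t| ≤ |q| * t ^ 2 / 2 := by
  refine abs_le_mul_sq_div_two_of_abs_deriv_le hy hy0 (fun s hs => ?_) ht
  calc |v s| = √(v s ^ 2) := (sqrt_sq_eq_abs _).symm
    _ ≤ √(lam * y s ^ 2 + v s ^ 2) := sqrt_le_sqrt (le_add_of_nonneg_left (by positivity))
    _ ≤ |q| * s := sqrt_energy_le hlam hc hy hv hy0 hv0 hs

end DampedOscillator

theorem rpow_three_halves_eq_sqrt_pow {t : ℝ} (ht : 0 ≤ t) : t ^ ((3 : ℝ) / 2) = √t ^ 3 := by
  rw [sqrt_eq_rpow, ← rpow_natCast, ← rpow_mul ht]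
  norm_num

theorem le_mul_rpow_three_halves_div_sqrt {x a t c : ℝ} (ha : 0 ≤ a) (ht : 0 ≤ t) (hc : 0 < c)
    (hc2 : c ≤ 2) (hlin : x ≤ a * t) (hquad : x ≤ a * t ^ 2 / 2) :
    x ≤ a * t ^ ((3 : ℝ) / 2) / √c := by
  have hsc : 0 < √c := sqrt_pos.2 hc
  have hst : √t ^ 2 = t := sq_sqrt ht
  rw [rpow_three_halves_eq_sqrt_pow ht, le_div_iff₀ hsc]
  rcases le_total t c with htc | hct
  · have hprod : √t * √c ≤ 2 :=
      calc √t * √c ≤ √c * √c := by gcongr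
        _ = c := mul_self_sqrt hc.le
        _ ≤ 2 := hc2
    calc x * √c ≤ a * t ^ 2 / 2 * √c := by gcongr
      _ = a * √t ^ 3 * (√t * √c / 2) := by
        linear_combination -(a * √c / 2 * (t + √t ^ 2)) * hst
      _ ≤ a * √t ^ 3 * 1 := by gcongr; linarith
      _ = a * √t ^ 3 := mul_one _
  · calc x * √c ≤ a * t * √t := by gcongr
      _ = a * √t ^ 3 := by linear_combination -(a * √t) * hst

theorem sq_mul_rpow_three_halves_div_sqrt {a t c : ℝ} (ht : 0 ≤ t) (hc : 0 ≤ c) :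
    (a * t ^ ((3 : ℝ) / 2) / √c) ^ 2 = t ^ 3 / c * a ^ 2 := by
  rw [rpow_three_halves_eq_sqrt_pow ht, div_pow, mul_pow, ← pow_mul, sq_sqrt hc,
    show 3 * 2 = 2 * 3 from rfl, pow_mul, sq_sqrt ht]
  ring

/-- forced underdamped oscillators
`ÿⁱ + cλᵢẏⁱ + λᵢyⁱ = qⁱ`, `yⁱ(0) = ẏⁱ(0) = 0`, with `λᵢ ∈ (0,1]`, `0 < c ≤ √2`,
satisfy `√λᵢ |yⁱ(t)| ≤ |qⁱ| t^{3/2}/√c`, and hence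
`Σᵢ λᵢ yⁱ(t)² ≤ (t³/c) Σᵢ (qⁱ)²`. -/
theorem forced_oscillator_bound
    (lam q : ℕ → ℝ) (hlam : ∀ i, 0 < lam i ∧ lam i ≤ 1)
    (c : ℝ) (hc0 : 0 < c) (hc2 : c ≤ Real.sqrt 2)
    (hq : Summable (fun i => (q i) ^ 2))
    (y v : ℕ → ℝ → ℝ)
    (hy : ∀ i t, HasDerivAt (y i) (v i t) t)
    (hv : ∀ i t, HasDerivAt (v i) (q i - c * lam i * v i t - lam i * y i t) t)
    (hy0 : ∀ i, y i 0 = 0) (hv0 : ∀ i, v i 0 = 0) :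
    (∀ i, ∀ t : ℝ, 0 ≤ t →
      Real.sqrt (lam i) * |y i t| ≤ |q i| * t ^ ((3:ℝ)/2) / Real.sqrt c) ∧
    (∀ t : ℝ, 0 ≤ t →
      ∑' i, lam i * (y i t) ^ 2 ≤ t ^ 3 / c * ∑' i, (q i) ^ 2) := by
  have hc : c ≤ 2 := hc2.trans (sqrt_le_iff.2 ⟨by norm_num, by norm_num⟩)
  have hbound : ∀ i, ∀ t : ℝ, 0 ≤ t →
      √(lam i) * |y i t| ≤ |q i| * t ^ ((3:ℝ)/2) / √c := by
    intro i t ht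
    obtain ⟨hl0, hl1⟩ := hlam i
    exact le_mul_rpow_three_halves_div_sqrt (abs_nonneg _) ht hc0 hc
      (DampedOscillator.sqrt_mul_abs_le hl0.le hc0.le (hy i) (hv i) (hy0 i) (hv0 i) ht)
      ((mul_le_of_le_one_left (abs_nonneg _) (sqrt_le_one.2 hl1)).trans
        (DampedOscillator.abs_le_mul_sq_div_two hl0.le hc0.le (hy i) (hv i) (hy0 i) (hv0 i) ht))
  refine ⟨hbound, fun t ht => ?_⟩
  have hterm : ∀ i, lam i * y i t ^ 2 ≤ t ^ 3 / c * q i ^ 2 := fun i => by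
    have := pow_le_pow_left₀ (by positivity) (hbound i t ht) 2
    rwa [sq_mul_rpow_three_halves_div_sqrt ht hc0.le, sq_abs, mul_pow, sq_sqrt (hlam i).1.le,
      sq_abs] at this
  calc ∑' i, lam i * y i t ^ 2 ≤ ∑' i, t ^ 3 / c * q i ^ 2 :=
        Summable.tsum_le_tsum hterm
          ((hq.mul_left _).of_nonneg_of_le (fun i => mul_nonneg (hlam i).1.le (sq_nonneg _)) hterm)
          (hq.mul_left _)
    _ = t ^ 3 / c * ∑' i, q i ^ 2 := tsum_mul_left
end

section
/- Let λ > 0, 0 < c ≤ √2 ensure the underdamped regime, and consider u solving ü + cλu̇ + λu = 0 with u(0) = u₀, u̇(0) = 0 for each coordinate of an ℓ² sequence with Σ u₀ⁱ² < ∞. Then Σᵢ λᵢ uⁱ(t)² ≤ (2/(e·c·t)) Σᵢ (u₀ⁱ)² for all t > 0. -/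
open Real Filter Topology

/-!
Along a solution of `u' = v`, `v' = -cλ v - λ u` the quadratic energy `λu² + v² + cλuv` satisfies
`E' = -cλ E`, so `E(t) = λ u₀² e^{-cλt}`. When `c²λ ≤ 2` the energy controls `λu²/2`, since
`2E - λu² = λ(u + cv)² + (2 - c²λ)v²`. Finally `λ e^{-cλt} ≤ 1/(ect)` uniformly in `λ`, because
`y e^{-y} ≤ e^{-1}`; summing the resulting coordinatewise bounds gives the theorem.
-/

theorem eq_mul_exp_of_hasDerivAt_eq_mul {f : ℝ → ℝ} {a : ℝ}
    (hf : ∀ x, HasDerivAt f (a * f x) x) (t : ℝ) : f t = f 0 * exp (a * t) := by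
  have hg : ∀ x, HasDerivAt (fun x => f x * exp (-(a * x))) 0 x := by
    intro x
    have hexp : HasDerivAt (fun x => exp (-(a * x))) (exp (-(a * x)) * -a) x := by
      simpa using ((hasDerivAt_id x).const_mul a).neg.exp
    exact ((hf x).mul hexp).congr_deriv (by ring)
  have hconst := is_const_of_deriv_eq_zero (fun x => (hg x).differentiableAt)
    (fun x => (hg x).deriv) t 0
  simp only [mul_zero, neg_zero, exp_zero, mul_one] at hconst
  rw [← hconst, mul_assoc, ← exp_add, neg_add_cancel, exp_zero, mul_one]

def oscillatorEnergy (lam c u v : ℝ) : ℝ := lam * u ^ 2 + v ^ 2 + c * lam * u * v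

section Oscillator

variable {lam c : ℝ} {u v : ℝ → ℝ}

theorem hasDerivAt_oscillatorEnergy (hu : ∀ t, HasDerivAt u (v t) t)
    (hv : ∀ t, HasDerivAt v (-(c * lam) * v t - lam * u t) t) (t : ℝ) :
    HasDerivAt (fun t => oscillatorEnergy lam c (u t) (v t))
      (-(c * lam) * oscillatorEnergy lam c (u t) (v t)) t := by
  have h := ((((hu t).pow 2).const_mul lam).add ((hv t).pow 2)).add
    (((hu t).const_mul (c * lam)).mul (hv t))
  refine h.congr_deriv ?_
  simp only [oscillatorEnergy, Nat.cast_ofNat, Nat.add_one_sub_one, pow_one]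
  ring

theorem oscillatorEnergy_eq (hu : ∀ t, HasDerivAt u (v t) t)
    (hv : ∀ t, HasDerivAt v (-(c * lam) * v t - lam * u t) t) (hv0 : v 0 = 0) (t : ℝ) :
    oscillatorEnergy lam c (u t) (v t) = lam * u 0 ^ 2 * exp (-(c * lam) * t) := by
  rw [eq_mul_exp_of_hasDerivAt_eq_mul (hasDerivAt_oscillatorEnergy hu hv) t, oscillatorEnergy,
    hv0]
  ring

end Oscillator

theorem mul_sq_le_two_mul_oscillatorEnergy {lam c : ℝ} (hlam : 0 ≤ lam) (hcl : c ^ 2 * lam ≤ 2)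
    (u v : ℝ) : lam * u ^ 2 ≤ 2 * oscillatorEnergy lam c u v := by
  have h₁ : 0 ≤ lam * (u + c * v) ^ 2 := by positivity
  have h₂ : 0 ≤ (2 - c ^ 2 * lam) * v ^ 2 := mul_nonneg (sub_nonneg.2 hcl) (sq_nonneg v)
  unfold oscillatorEnergy
  nlinarith

theorem mul_exp_neg_mul_le {k : ℝ} (hk : 0 < k) (lam : ℝ) :
    lam * exp (-(k * lam)) ≤ exp (-1) / k := by
  rw [le_div_iff₀ hk, mul_right_comm, mul_comm lam k]
  exact mul_exp_neg_le_exp_neg_one (k * lam)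

theorem mul_sq_le_of_oscillator {lam c t : ℝ} {u v : ℝ → ℝ} (hlam : 0 ≤ lam)
    (hcl : c ^ 2 * lam ≤ 2) (hc : 0 < c) (ht : 0 < t)
    (hu : ∀ t, HasDerivAt u (v t) t)
    (hv : ∀ t, HasDerivAt v (-(c * lam) * v t - lam * u t) t) (hv0 : v 0 = 0) :
    lam * u t ^ 2 ≤ 2 / (exp 1 * c * t) * u 0 ^ 2 := by
  have hdecay : lam * exp (-(c * t * lam)) ≤ exp (-1) / (c * t) :=
    mul_exp_neg_mul_le (mul_pos hc ht) lam
  calc lam * u t ^ 2 ≤ 2 * oscillatorEnergy lam c (u t) (v t) :=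
        mul_sq_le_two_mul_oscillatorEnergy hlam hcl _ _
    _ = 2 * (lam * exp (-(c * t * lam))) * u 0 ^ 2 := by
        rw [oscillatorEnergy_eq hu hv hv0]
        ring_nf
    _ ≤ 2 * (exp (-1) / (c * t)) * u 0 ^ 2 := by gcongr
    _ = 2 / (exp 1 * c * t) * u 0 ^ 2 := by
        rw [exp_neg]
        field_simp

/-- free underdamped oscillators
`üⁱ + cλᵢu̇ⁱ + λᵢuⁱ = 0`, `uⁱ(0) = u₀ⁱ`, `u̇ⁱ(0) = 0`, with `λᵢ ∈ (0,1]`,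
`0 < c ≤ √2` and `Σᵢ (u₀ⁱ)² < ∞`, satisfy
`Σᵢ λᵢ uⁱ(t)² ≤ (2/(e·c·t)) Σᵢ (u₀ⁱ)²` for all `t > 0`. -/
theorem free_oscillator_sum_bound
    (lam u₀ : ℕ → ℝ) (hlam : ∀ i, 0 < lam i ∧ lam i ≤ 1)
    (c : ℝ) (hc0 : 0 < c) (hc2 : c ≤ Real.sqrt 2)
    (hu₀ : Summable (fun i => (u₀ i) ^ 2))
    (u v : ℕ → ℝ → ℝ)
    (hu : ∀ i t, HasDerivAt (u i) (v i t) t)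
    (hv : ∀ i t, HasDerivAt (v i) (-(c * lam i) * v i t - lam i * u i t) t)
    (hu0 : ∀ i, u i 0 = u₀ i) (hv0 : ∀ i, v i 0 = 0) :
    ∀ t : ℝ, 0 < t →
      ∑' i, lam i * (u i t) ^ 2 ≤ 2 / (Real.exp 1 * c * t) * ∑' i, (u₀ i) ^ 2 := by
  intro t ht
  have hc_sq : c ^ 2 ≤ 2 := (le_sqrt hc0.le zero_le_two).1 hc2
  have hbound (i : ℕ) : lam i * u i t ^ 2 ≤ 2 / (exp 1 * c * t) * u₀ i ^ 2 := by
    rw [← hu0 i]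
    have hcl : c ^ 2 * lam i ≤ 2 := (mul_le_of_le_one_right (sq_nonneg c) (hlam i).2).trans hc_sq
    exact mul_sq_le_of_oscillator (hlam i).1.le hcl hc0 ht (hu i) (hv i) (hv0 i)
  have hsum : Summable fun i => 2 / (exp 1 * c * t) * u₀ i ^ 2 := hu₀.mul_left _
  have hsum_lhs : Summable fun i => lam i * u i t ^ 2 :=
    hsum.of_nonneg_of_le (fun i => mul_nonneg (hlam i).1.le (sq_nonneg _)) hbound
  rw [← tsum_mul_left]
  exact hsum_lhs.tsum_le_tsum hbound hsum
end
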